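/- arXiv:2412.17768 — 3 statements merged into one kernel-verified Lean document; each statement's English description precedes it below -/
import Mathlib

section
/- Let d > 6 be an integer. There exists a constant C = C(d) > 0 such that for all x, y ∈ ℤ^d with x ≠ 0 and y ≠ 0, one has ∑_{u, v ∈ ℤ^d} |u − x|^{2−d} |v − y|^{2−d} |u|^{2−d} |v|^{2−d} |u − v|^{2−d} ≤ C |x|^{2−d} |y|^{2−d}, where terms in which any of u − x, v − y, u, v, u − v vanishes are omitted from the sum. -/
open scoped ENNReal

/-- The power `|x|^a` (ℓ^∞ norm of a lattice point, real exponent), valued in `[0,∞]`,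
with the convention that the term is omitted (set to `0`) when the base vanishes. -/
noncomputable def latPow {d : ℕ} (x : Fin d → ℤ) (a : ℝ) : ℝ≥0∞ :=
  if x = 0 then 0 else ENNReal.ofReal (‖x‖ ^ a)

/-!
Replace each power `|z|^{2-d}` by `⟨z⟩^{2-d}` with `⟨z⟩ = max |z| 1`: this only enlarges the
terms and changes nothing off the origin. Since `⟨u⟩ + ⟨u - x⟩ ≥ ⟨x⟩`, the product of the two
factors containing `u` is at most `2^{d-2} ⟨x⟩^{2-d}` times their sum, and likewise for `v`. This
leaves four triangle sums `∑ ⟨u-a⟩^{2-d} ⟨v-b⟩^{2-d} ⟨u-v⟩^{2-d}`, bounded uniformly in `a, b` by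
applying twice the convolution bound
`∑_v ⟨v-a⟩^{-α} ⟨v-b⟩^{-β} ≤ 2^{α+β-s+1} ⟨b-a⟩^{s-α-β} ∑_z ⟨z⟩^{-s}` (for `α, β ≤ s ≤ α + β`)
with `s = 3(d-2)/2`. The lattice sum `∑_z ⟨z⟩^{-s}` is finite because `s > d`, i.e. `d > 6`.
-/

open ENNReal

lemma rpow_neg_mul_rpow_neg_le_of_le {A B D α β s : ℝ} (hA : 0 < A) (hAB : A ≤ B) (hD : 0 < D)
    (hDB : D ≤ 2 * B) (hα : α ≤ s) (hs : s ≤ α + β) :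
    A ^ (-α) * B ^ (-β) ≤ 2 ^ (α + β - s) * D ^ (s - α - β) * A ^ (-s) := by
  have hB : 0 < B := hA.trans_le hAB
  have hBD : B ^ (s - α - β) ≤ (D / 2) ^ (s - α - β) :=
    Real.rpow_le_rpow_of_nonpos (by positivity) (by linarith) (by linarith)
  have hBA : B ^ (α - s) ≤ A ^ (α - s) := Real.rpow_le_rpow_of_nonpos hA hAB (by linarith)
  have hD2 : (D / 2) ^ (s - α - β) = 2 ^ (α + β - s) * D ^ (s - α - β) := by
    rw [Real.div_rpow hD.le zero_le_two, div_eq_mul_inv, ← Real.rpow_neg zero_le_two, mul_comm]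
    congr 2; ring
  calc A ^ (-α) * B ^ (-β) = A ^ (-α) * (B ^ (s - α - β) * B ^ (α - s)) := by
        rw [← Real.rpow_add hB]; ring_nf
    _ ≤ A ^ (-α) * ((D / 2) ^ (s - α - β) * A ^ (α - s)) := by gcongr
    _ = 2 ^ (α + β - s) * D ^ (s - α - β) * (A ^ (-α) * A ^ (α - s)) := by rw [hD2]; ring
    _ = 2 ^ (α + β - s) * D ^ (s - α - β) * A ^ (-s) := by
        rw [← Real.rpow_add hA]; congr 2; ring

lemma rpow_neg_mul_rpow_neg_le {A B D α β s : ℝ} (hA : 0 < A) (hB : 0 < B) (hD : 0 < D)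
    (hDAB : D ≤ A + B) (hα : α ≤ s) (hβ : β ≤ s) (hs : s ≤ α + β) :
    A ^ (-α) * B ^ (-β) ≤ 2 ^ (α + β - s) * D ^ (s - α - β) * (A ^ (-s) + B ^ (-s)) := by
  rcases le_total A B with hAB | hBA
  · calc A ^ (-α) * B ^ (-β) ≤ 2 ^ (α + β - s) * D ^ (s - α - β) * A ^ (-s) :=
          rpow_neg_mul_rpow_neg_le_of_le hA hAB hD (by linarith) hα hs
      _ ≤ _ := by gcongr; exact le_add_of_nonneg_right (by positivity)
  · calc A ^ (-α) * B ^ (-β) = B ^ (-β) * A ^ (-α) := mul_comm _ _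
      _ ≤ 2 ^ (β + α - s) * D ^ (s - β - α) * B ^ (-s) :=
          rpow_neg_mul_rpow_neg_le_of_le hB hBA hD (by linarith) hβ (by linarith)
      _ ≤ _ := by
          rw [add_comm β, sub_sub, add_comm β, ← sub_sub]
          gcongr; exact le_add_of_nonneg_left (by positivity)

section bracket

variable {E : Type*} [SeminormedAddCommGroup E]

noncomputable def bracketPow (z : E) (a : ℝ) : ℝ≥0∞ :=
  ENNReal.ofReal (max ‖z‖ 1 ^ a)

lemma bracketPow_sub_comm (u v : E) (a : ℝ) : bracketPow (u - v) a = bracketPow (v - u) a := by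
  rw [bracketPow, bracketPow, norm_sub_rev]

lemma bracketPow_le_one (z : E) {a : ℝ} (ha : a ≤ 0) : bracketPow z a ≤ 1 :=
  ENNReal.ofReal_le_one.2 (Real.rpow_le_one_of_one_le_of_nonpos (le_max_right _ _) ha)

lemma bracketPow_sub_mul_bracketPow_sub_le {α β s : ℝ} (hα : α ≤ s) (hβ : β ≤ s)
    (hs : s ≤ α + β) (v a b : E) :
    bracketPow (v - a) (-α) * bracketPow (v - b) (-β) ≤
      ENNReal.ofReal (2 ^ (α + β - s)) * bracketPow (b - a) (s - α - β) *
        (bracketPow (v - a) (-s) + bracketPow (v - b) (-s)) := by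
  have hD : max ‖b - a‖ 1 ≤ max ‖v - a‖ 1 + max ‖v - b‖ 1 := by
    have := norm_sub_le_norm_sub_add_norm_sub b v a
    rw [norm_sub_rev b v] at this
    exact max_le (by linarith [le_max_left ‖v - a‖ 1, le_max_left ‖v - b‖ 1])
      (by linarith [le_max_right ‖v - a‖ 1, le_max_right ‖v - b‖ 1])
  simp only [bracketPow]
  rw [← ofReal_add (by positivity) (by positivity), ← ofReal_mul (by positivity),
    ← ofReal_mul (by positivity), ← ofReal_mul (by positivity)]
  exact ofReal_le_ofReal (rpow_neg_mul_rpow_neg_le (by positivity) (by positivity)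
    (by positivity) hD hα hβ hs)

lemma tsum_bracketPow_sub_mul_bracketPow_sub_le {α β s : ℝ} (hα : α ≤ s) (hβ : β ≤ s)
    (hs : s ≤ α + β) (a b : E) :
    ∑' v, bracketPow (v - a) (-α) * bracketPow (v - b) (-β) ≤
      ENNReal.ofReal (2 ^ (α + β - s)) * bracketPow (b - a) (s - α - β) *
        (2 * ∑' z : E, bracketPow z (-s)) := by
  have shift (c : E) : ∑' v, bracketPow (v - c) (-s) = ∑' z : E, bracketPow z (-s) :=
    (Equiv.subRight c).tsum_eq fun z => bracketPow z (-s)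
  calc ∑' v, bracketPow (v - a) (-α) * bracketPow (v - b) (-β)
      ≤ ∑' v, ENNReal.ofReal (2 ^ (α + β - s)) * bracketPow (b - a) (s - α - β) *
          (bracketPow (v - a) (-s) + bracketPow (v - b) (-s)) :=
        ENNReal.tsum_le_tsum fun v => bracketPow_sub_mul_bracketPow_sub_le hα hβ hs v a b
    _ = _ := by rw [ENNReal.tsum_mul_left, ENNReal.tsum_add, shift, shift, two_mul]

lemma bracketPow_mul_bracketPow_sub_le {m : ℝ} (hm : 0 ≤ m) (u x : E) :
    bracketPow u (-m) * bracketPow (u - x) (-m) ≤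
      ENNReal.ofReal (2 ^ m) * bracketPow x (-m) *
        (bracketPow u (-m) + bracketPow (u - x) (-m)) := by
  have := bracketPow_sub_mul_bracketPow_sub_le le_rfl le_rfl (by linarith) u 0 x
  simpa only [sub_zero, add_sub_cancel_right, sub_self, zero_sub] using this

lemma tsum_tsum_bracketPow_triangle_le {m s : ℝ} (hms : m ≤ s) (hsm : 2 * s ≤ 3 * m) (a b : E) :
    ∑' u, ∑' v, bracketPow (u - a) (-m) * bracketPow (v - b) (-m) * bracketPow (u - v) (-m) ≤
      ENNReal.ofReal (2 ^ (5 * m - 3 * s)) * (2 * ∑' z : E, bracketPow z (-s)) ^ 2 := by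
  set K := 2 * ∑' z : E, bracketPow z (-s)
  have inner (u : E) : ∑' v, bracketPow (v - b) (-m) * bracketPow (v - u) (-m) ≤
      ENNReal.ofReal (2 ^ (2 * m - s)) * bracketPow (u - b) (-(2 * m - s)) * K := by
    have := tsum_bracketPow_sub_mul_bracketPow_sub_le hms hms (by linarith) b u
    rwa [show m + m - s = 2 * m - s by ring, show s - m - m = -(2 * m - s) by ring] at this
  have outer : ∑' u, bracketPow (u - a) (-m) * bracketPow (u - b) (-(2 * m - s)) ≤
      ENNReal.ofReal (2 ^ (3 * m - 2 * s)) * K := by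
    have := tsum_bracketPow_sub_mul_bracketPow_sub_le (β := 2 * m - s) hms (by linarith)
      (by linarith) a b
    refine this.trans ?_
    rw [show m + (2 * m - s) - s = 3 * m - 2 * s by ring]
    grw [bracketPow_le_one (b - a) (by linarith), mul_one]
  calc ∑' u, ∑' v, bracketPow (u - a) (-m) * bracketPow (v - b) (-m) * bracketPow (u - v) (-m)
      = ∑' u, bracketPow (u - a) (-m) *
          ∑' v, bracketPow (v - b) (-m) * bracketPow (v - u) (-m) := by
        refine tsum_congr fun u => ?_
        rw [← ENNReal.tsum_mul_left]
        refine tsum_congr fun v => ?_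
        rw [bracketPow_sub_comm u v, mul_assoc]
    _ ≤ ∑' u, bracketPow (u - a) (-m) *
          (ENNReal.ofReal (2 ^ (2 * m - s)) * bracketPow (u - b) (-(2 * m - s)) * K) := by
        gcongr with u; exact inner u
    _ = ENNReal.ofReal (2 ^ (2 * m - s)) * K *
          ∑' u, bracketPow (u - a) (-m) * bracketPow (u - b) (-(2 * m - s)) := by
        rw [← ENNReal.tsum_mul_left]
        refine tsum_congr fun u => ?_
        ring
    _ ≤ ENNReal.ofReal (2 ^ (2 * m - s)) * K * (ENNReal.ofReal (2 ^ (3 * m - 2 * s)) * K) := by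
        gcongr
    _ = ENNReal.ofReal (2 ^ (5 * m - 3 * s)) * K ^ 2 := by
        rw [show 5 * m - 3 * s = (2 * m - s) + (3 * m - 2 * s) by ring,
          Real.rpow_add zero_lt_two, ofReal_mul (by positivity)]
        ring

lemma tsum_tsum_bracketPow_diagram_le {m s : ℝ} (hms : m ≤ s) (hsm : 2 * s ≤ 3 * m) (x y : E) :
    ∑' u, ∑' v, bracketPow (u - x) (-m) * bracketPow (v - y) (-m) * bracketPow u (-m) *
        bracketPow v (-m) * bracketPow (u - v) (-m) ≤
      ENNReal.ofReal (2 ^ m) ^ 2 * bracketPow x (-m) * bracketPow y (-m) *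
        (4 * (ENNReal.ofReal (2 ^ (5 * m - 3 * s)) * (2 * ∑' z : E, bracketPow z (-s)) ^ 2)) := by
  have hm : 0 ≤ m := by linarith
  set T := ENNReal.ofReal (2 ^ (5 * m - 3 * s)) * (2 * ∑' z : E, bracketPow z (-s)) ^ 2
  set c := ENNReal.ofReal (2 ^ m)
  set S : E → E → ℝ≥0∞ := fun a b => ∑' u, ∑' v,
    bracketPow (u - a) (-m) * bracketPow (v - b) (-m) * bracketPow (u - v) (-m)
  have hS (a b : E) : S a b ≤ T := tsum_tsum_bracketPow_triangle_le hms hsm a b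
  calc ∑' u, ∑' v, bracketPow (u - x) (-m) * bracketPow (v - y) (-m) * bracketPow u (-m) *
        bracketPow v (-m) * bracketPow (u - v) (-m)
      ≤ ∑' u, ∑' v, c * bracketPow x (-m) * (bracketPow u (-m) + bracketPow (u - x) (-m)) *
          (c * bracketPow y (-m) * (bracketPow v (-m) + bracketPow (v - y) (-m))) *
          bracketPow (u - v) (-m) := by
        refine ENNReal.tsum_le_tsum fun u => ENNReal.tsum_le_tsum fun v => ?_
        calc _ = bracketPow u (-m) * bracketPow (u - x) (-m) *
              (bracketPow v (-m) * bracketPow (v - y) (-m)) * bracketPow (u - v) (-m) := by ring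
          _ ≤ _ := mul_le_mul' (mul_le_mul' (bracketPow_mul_bracketPow_sub_le hm u x)
              (bracketPow_mul_bracketPow_sub_le hm v y)) le_rfl
    _ = c ^ 2 * bracketPow x (-m) * bracketPow y (-m) * (S 0 0 + S 0 y + S x 0 + S x y) := by
        simp only [S, sub_zero, ← ENNReal.tsum_add, ← ENNReal.tsum_mul_left]
        refine tsum_congr fun u => tsum_congr fun v => ?_
        ring
    _ ≤ c ^ 2 * bracketPow x (-m) * bracketPow y (-m) * (4 * T) := by
        gcongr
        calc S 0 0 + S 0 y + S x 0 + S x y ≤ T + T + T + T := by gcongr <;> exact hS _ _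
          _ = 4 * T := by ring

end bracket

section lattice

variable {ι : Type*} [Fintype ι]

lemma one_le_norm_of_ne_zero {z : ι → ℤ} (hz : z ≠ 0) : (1 : ℝ) ≤ ‖z‖ := by
  obtain ⟨i, hi⟩ := Function.ne_iff.1 hz
  calc (1 : ℝ) ≤ ‖z i‖ := by
        rw [Int.norm_eq_abs]; exact_mod_cast Int.one_le_abs (by simpa using hi)
    _ ≤ ‖z‖ := norm_le_pi_norm z i

lemma bracketPow_of_ne_zero {z : ι → ℤ} (hz : z ≠ 0) (a : ℝ) :
    bracketPow z a = ENNReal.ofReal (‖z‖ ^ a) := by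
  rw [bracketPow, max_eq_left (one_le_norm_of_ne_zero hz)]

open Module Submodule in
lemma summable_norm_rpow_of_lt_neg_card {r : ℝ} (hr : r < -Fintype.card ι) :
    Summable fun z : ι → ℤ => ‖z‖ ^ r := by
  let L := span ℤ (Set.range (Pi.basisFun ℝ ι))
  have hrank : finrank ℤ L = Fintype.card ι := by
    rw [ZLattice.rank ℝ L, finrank_fintype_fun_eq_card]
  let φ : (ι → ℤ) → L := fun z => ⟨fun i => (z i : ℝ), by
    rw [Basis.mem_span_iff_repr_mem]; intro i; simp⟩
  have hφ : Function.Injective φ := fun z w h => funext fun i => by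
    simpa [φ] using congrFun (congrArg Subtype.val h) i
  have hnorm (z : ι → ℤ) : ‖φ z‖ = ‖z‖ := rfl
  simpa only [Function.comp_def, hnorm] using
    (ZLattice.summable_norm_rpow L r (by rwa [hrank])).comp_injective hφ

lemma tsum_bracketPow_ne_top {s : ℝ} (hs : Fintype.card ι < s) :
    ∑' z : ι → ℤ, bracketPow z (-s) ≠ ∞ := by
  have hsum : Summable fun z : ι → ℤ => max ‖z‖ 1 ^ (-s) := by
    refine ((summable_norm_rpow_of_lt_neg_card (neg_lt_neg hs)).update 0 1).congr fun z => ?_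
    by_cases hz : z = 0
    · simp [hz]
    · simp [hz, max_eq_left (one_le_norm_of_ne_zero hz)]
  simp only [bracketPow]
  rw [← ENNReal.ofReal_tsum_of_nonneg (fun _ => by positivity) hsum]
  exact ofReal_ne_top

end lattice

lemma latPow_le_bracketPow {d : ℕ} (z : Fin d → ℤ) (a : ℝ) : latPow z a ≤ bracketPow z a := by
  rw [latPow]
  split_ifs with hz
  · exact zero_le
  · rw [bracketPow_of_ne_zero hz]

theorem statement2 (d : ℕ) (hd : 6 < d) :
    ∃ C : ℝ, 0 < C ∧ ∀ x y : Fin d → ℤ, x ≠ 0 → y ≠ 0 →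
      ∑' u : Fin d → ℤ, ∑' v : Fin d → ℤ,
        latPow (u - x) ((2 : ℝ) - d) * latPow (v - y) ((2 : ℝ) - d) *
          latPow u ((2 : ℝ) - d) * latPow v ((2 : ℝ) - d) * latPow (u - v) ((2 : ℝ) - d) ≤
        ENNReal.ofReal (C * (‖x‖ ^ ((2 : ℝ) - d) * ‖y‖ ^ ((2 : ℝ) - d))) := by
  set m : ℝ := d - 2 with hm
  set s : ℝ := 3 * m / 2 with hs
  have hd' : (6 : ℝ) < d := by exact_mod_cast hd
  have hK : ∑' z : Fin d → ℤ, bracketPow z (-s) ≠ ∞ :=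
    tsum_bracketPow_ne_top (by simp only [Fintype.card_fin, s, m]; linarith)
  set C' := ENNReal.ofReal (2 ^ m) ^ 2 *
    (4 * (ENNReal.ofReal (2 ^ (5 * m - 3 * s)) * (2 * ∑' z : Fin d → ℤ, bracketPow z (-s)) ^ 2))
  have hC' : C' ≠ ∞ := by finiteness
  refine ⟨C'.toReal + 1, by positivity, fun x y hx hy => ?_⟩
  have hexp : (2 : ℝ) - d = -m := by ring
  simp only [hexp]
  calc _ ≤ ∑' u : Fin d → ℤ, ∑' v : Fin d → ℤ,
        bracketPow (u - x) (-m) * bracketPow (v - y) (-m) * bracketPow u (-m) *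
          bracketPow v (-m) * bracketPow (u - v) (-m) := by
        gcongr <;> exact latPow_le_bracketPow _ _
    _ ≤ C' * bracketPow x (-m) * bracketPow y (-m) := by
        refine (tsum_tsum_bracketPow_diagram_le (s := s) (by linarith) (by linarith) x y).trans_eq
          ?_
        ring
    _ = ENNReal.ofReal (C'.toReal * (‖x‖ ^ (-m) * ‖y‖ ^ (-m))) := by
        rw [bracketPow_of_ne_zero hx, bracketPow_of_ne_zero hy, ENNReal.ofReal_mul toReal_nonneg,
          ofReal_toReal hC', ENNReal.ofReal_mul (by positivity), mul_assoc]
    _ ≤ _ := by gcongr; linarith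
end

section
/- Let d > 6 be an integer. For every ε > 0 there exists K ≥ 1 such that for every v ∈ ℤ^d with |v| ≥ K and every x ∈ ℤ^d with x ≠ 0, one has ∑_{y, u, w ∈ ℤ^d} |u|^{2−d} |w − u|^{2−d} |y − w|^{2−d} |y + v − u|^{2−d} |u − x|^{2−d} ≤ ε |x|^{4−d}, where terms in which any of u, w − u, y − w, y + v − u, u − x vanishes are omitted from the sum. -/
open scoped ENNReal

/-!
Write `⟨z⟩ = 1 + |z|`. Everything rests on the lattice convolution estimate
`∑_w ⟨w - a⟩^{-s} ⟨w - b⟩^{-t} ≤ C ⟨a - b⟩^{d-s-t}` for `s, t < d < s + t`: one of `⟨w - a⟩`,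
`⟨w - b⟩` is at least `⟨a - b⟩ / 2`, and the remaining sums over the ball `⟨z⟩ ≤ ⟨a - b⟩` and over
its complement are controlled by counting the `O(n^{d-1})` lattice points with `|z| = n`.
Since `|z|^{2-d} ≤ 2^{d-2} ⟨z⟩^{2-d}` for `z ≠ 0`, summing first over `w` (giving `⟨u - y⟩^{4-d}`),
then over `y` (giving `⟨v⟩^{6-d}`) and finally over `u` (giving `⟨x⟩^{4-d} ≤ |x|^{4-d}`) bounds the
sum by `C ⟨v⟩^{6-d} |x|^{4-d}`, and `C ⟨v⟩^{6-d} ≤ ε` for large `|v|` because `d > 6`.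
-/

namespace LatticeSum

open Finset

lemma pow_mul_inv_pow_of_le {a : ℝ≥0∞} (h0 : a ≠ 0) (ht : a ≠ ∞) {j k : ℕ} (h : k ≤ j) :
    a ^ j * a⁻¹ ^ k = a ^ (j - k) := by
  rw [← Nat.sub_add_cancel h, pow_add, mul_assoc, ← mul_pow, ENNReal.mul_inv_cancel h0 ht, one_pow,
    mul_one, Nat.add_sub_cancel]

lemma inv_pow_mul_pow_of_le {a : ℝ≥0∞} (h0 : a ≠ 0) (ht : a ≠ ∞) {j k : ℕ} (h : k ≤ j) :
    a⁻¹ ^ j * a ^ k = a⁻¹ ^ (j - k) := by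
  simpa using pow_mul_inv_pow_of_le (ENNReal.inv_ne_zero.2 ht) (ENNReal.inv_ne_top.2 h0) h

lemma inv_le_two_mul_inv {B M : ℕ} (h : M ≤ 2 * B) : (B : ℝ≥0∞)⁻¹ ≤ 2 * (M : ℝ≥0∞)⁻¹ :=
  calc (B : ℝ≥0∞)⁻¹ = 2 * ((2 : ℝ≥0∞) * B)⁻¹ := by
        rw [ENNReal.mul_inv (by simp) (by simp), ← mul_assoc, ENNReal.mul_inv_cancel (by simp) (by simp),
          one_mul]
    _ ≤ 2 * (M : ℝ≥0∞)⁻¹ := by gcongr; exact_mod_cast h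

lemma tsum_ite_lt_eq_mul (R : ℕ) (c : ℝ≥0∞) :
    ∑' n : ℕ, (if n < R then c else 0) = R * c := by
  rw [tsum_eq_sum (s := range R) fun n hn => if_neg (by simpa using hn), ← sum_filter,
    filter_true_of_mem fun n hn => mem_range.1 hn, sum_const, card_range, nsmul_eq_mul]

lemma tsum_inv_sq_tail_le {R : ℕ} (hR : 1 ≤ R) :
    ∑' n : ℕ, (if R ≤ n then (n : ℝ≥0∞)⁻¹ ^ 2 else 0) ≤ 2 * (R : ℝ≥0∞)⁻¹ := by
  refine ENNReal.tsum_le_of_sum_range_le fun N => ?_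
  have hset : {n ∈ range N | R ≤ n} = Ioo (R - 1) N := by
    ext n; simp only [mem_filter, mem_range, mem_Ioo]; omega
  have hterm : ∀ n ∈ Ioo (R - 1) N, (n : ℝ≥0∞)⁻¹ ^ 2 = ENNReal.ofReal (((n : ℝ) ^ 2)⁻¹) := by
    intro n hn
    have : (0 : ℝ) < n := Nat.cast_pos.2 (by have := (mem_Ioo.1 hn).1; omega)
    rw [ENNReal.ofReal_inv_of_pos (by positivity), ENNReal.ofReal_pow this.le, ENNReal.ofReal_natCast,
      ENNReal.inv_pow]
  rw [← sum_filter, hset, sum_congr rfl hterm, ← ENNReal.ofReal_sum_of_nonneg fun n _ => by positivity]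
  refine (ENNReal.ofReal_le_ofReal (sum_Ioo_inv_sq_le (R - 1) N)).trans_eq ?_
  rw [Nat.cast_sub hR, Nat.cast_one, sub_add_cancel, ENNReal.ofReal_div_of_pos (by positivity),
    ENNReal.ofReal_ofNat, ENNReal.ofReal_natCast, div_eq_mul_inv]

lemma tsum_comp_sub_right {α : Type*} [AddGroup α] (f : α → ℝ≥0∞) (c : α) :
    ∑' w, f (w - c) = ∑' z, f z :=
  (Equiv.subRight c).tsum_eq f

variable {d : ℕ}

def supNorm (z : Fin d → ℤ) : ℕ := univ.sup fun i => (z i).natAbs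

lemma nnnorm_eq_supNorm (z : Fin d → ℤ) : ‖z‖₊ = supNorm z := by
  rw [Pi.nnnorm_def, supNorm, Nat.cast_finsetSup]
  simp only [NNReal.natCast_natAbs]

lemma norm_eq_supNorm (z : Fin d → ℤ) : ‖z‖ = supNorm z := by
  rw [← coe_nnnorm, nnnorm_eq_supNorm, NNReal.coe_natCast]

lemma supNorm_sub_le (p q : Fin d → ℤ) : supNorm (p - q) ≤ supNorm p + supNorm q := by
  have := norm_sub_le p q
  simp only [norm_eq_supNorm] at this
  exact_mod_cast this

lemma supNorm_neg (z : Fin d → ℤ) : supNorm (-z) = supNorm z := by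
  simp [supNorm]

lemma supNorm_le_iff {z : Fin d → ℤ} {n : ℕ} : supNorm z ≤ n ↔ ∀ i, (z i).natAbs ≤ n := by
  simp [supNorm]

lemma supNorm_eq_zero {z : Fin d → ℤ} : supNorm z = 0 ↔ z = 0 := by
  simp [supNorm, funext_iff]

noncomputable def box (d n : ℕ) : Finset (Fin d → ℤ) := Fintype.piFinset fun _ => Icc (-(n : ℤ)) n

lemma mem_box {n : ℕ} {z : Fin d → ℤ} : z ∈ box d n ↔ supNorm z ≤ n := by
  simp only [box, Fintype.mem_piFinset, mem_Icc, supNorm_le_iff]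
  exact forall_congr' fun i => by omega

lemma card_box (d n : ℕ) : #(box d n) = (2 * n + 1) ^ d := by
  simp only [box, Fintype.card_piFinset, Int.card_Icc, prod_const, card_univ, Fintype.card_fin]
  congr 1
  omega

noncomputable def sphere (d n : ℕ) : Finset (Fin d → ℤ) := {z ∈ box d n | supNorm z = n}

lemma mem_sphere {n : ℕ} {z : Fin d → ℤ} : z ∈ sphere d n ↔ supNorm z = n := by
  simp +contextual [sphere, mem_box]

lemma card_sphere_succ_le (d m : ℕ) : #(sphere d (m + 1)) ≤ 2 * d * (2 * m + 3) ^ (d - 1) := by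
  have hbox : box d m ⊆ box d (m + 1) := fun z hz => by rw [mem_box] at *; omega
  have hsub : sphere d (m + 1) ⊆ box d (m + 1) \ box d m := fun z hz => by
    simp only [mem_sdiff, mem_box, mem_sphere] at *; omega
  have hcard := card_le_card hsub
  rw [card_sdiff_of_subset hbox, card_box, card_box, show 2 * (m + 1) + 1 = 2 * m + 3 by ring]
    at hcard
  have hpow := (le_abs_self _).trans (abs_pow_sub_pow_le (α := ℤ) (2 * m + 3) (2 * m + 1) d)
  rw [abs_of_nonneg (by positivity : (0 : ℤ) ≤ 2 * m + 3),
    abs_of_nonneg (by positivity : (0 : ℤ) ≤ 2 * m + 1), max_eq_left (by omega)] at hpow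
  have hle : (2 * m + 1) ^ d ≤ (2 * m + 3) ^ d := Nat.pow_le_pow_left (by omega) d
  zify [hle] at hcard ⊢
  norm_num at hpow
  linarith

lemma card_sphere_le (hd : d ≠ 0) (n : ℕ) : #(sphere d n) ≤ 2 * d * (2 * n + 1) ^ (d - 1) := by
  rcases n with _ | m
  · have : sphere d 0 = {0} := by ext z; simp [mem_sphere, supNorm_eq_zero]
    simp only [this, card_singleton, mul_zero, zero_add, one_pow, mul_one]
    omega
  · exact card_sphere_succ_le d m

lemma tsum_comp_supNorm (g : ℕ → ℝ≥0∞) :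
    ∑' z : Fin d → ℤ, g (supNorm z) = ∑' n, #(sphere d n) * g n := by
  rw [← ENNReal.tsum_fiberwise _ supNorm]
  congr 1 with n
  have hfib : supNorm ⁻¹' {n} = (sphere d n : Set (Fin d → ℤ)) := by
    ext z; simp [mem_sphere]
  rw [hfib, Finset.tsum_subtype' (sphere d n) (fun z => g (supNorm z)),
    sum_congr rfl fun z hz => by rw [mem_sphere.1 hz], sum_const, nsmul_eq_mul]

/-- `⟨z⟩ = 1 + |z|`: it never vanishes, so the weights `⟨z⟩⁻ᵏ` need no exception at `z = 0`. -/
def bracket (z : Fin d → ℤ) : ℕ := supNorm z + 1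

noncomputable def weight (k : ℕ) (z : Fin d → ℤ) : ℝ≥0∞ := (bracket z : ℝ≥0∞)⁻¹ ^ k

lemma one_le_bracket (z : Fin d → ℤ) : 1 ≤ bracket z := Nat.le_add_left 1 _

lemma bracket_sub_le (a b w : Fin d → ℤ) : bracket (a - b) ≤ bracket (w - a) + bracket (w - b) := by
  have := supNorm_sub_le (w - b) (w - a)
  rw [sub_sub_sub_cancel_left] at this
  simp only [bracket]
  omega

lemma weight_sub_rev (s : ℕ) (p q : Fin d → ℤ) : weight s (p - q) = weight s (q - p) := by
  rw [← neg_sub, weight, bracket, supNorm_neg]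
  rfl

lemma tsum_comp_bracket_le (hd : d ≠ 0) (g : ℕ → ℝ≥0∞) :
    ∑' z : Fin d → ℤ, g (bracket z) ≤
      d * 2 ^ d * ∑' n : ℕ, ((n + 1 : ℕ) : ℝ≥0∞) ^ (d - 1) * g (n + 1) := by
  rw [← ENNReal.tsum_mul_left]
  refine (tsum_comp_supNorm fun n => g (n + 1)).trans_le (ENNReal.tsum_le_tsum fun n => ?_)
  have hcard : #(sphere d n) ≤ d * 2 ^ d * (n + 1) ^ (d - 1) := by
    calc #(sphere d n) ≤ 2 * d * (2 * (n + 1)) ^ (d - 1) :=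
          (card_sphere_le hd n).trans (by gcongr; omega)
      _ = d * 2 ^ d * (n + 1) ^ (d - 1) := by
          rw [mul_pow, ← mul_assoc, mul_comm 2 d, mul_assoc d 2, ← pow_succ', Nat.sub_add_cancel
            (Nat.one_le_iff_ne_zero.2 hd), mul_assoc]
  rw [← mul_assoc]
  gcongr
  exact_mod_cast hcard

noncomputable def ballWeight (R k : ℕ) (z : Fin d → ℤ) : ℝ≥0∞ :=
  if bracket z ≤ R then weight k z else 0

noncomputable def tailWeight (R k : ℕ) (z : Fin d → ℤ) : ℝ≥0∞ :=
  if R ≤ bracket z then weight k z else 0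

lemma tsum_ballWeight_le (hd : d ≠ 0) {s : ℕ} (hs : s < d) (R : ℕ) :
    ∑' z : Fin d → ℤ, ballWeight R s z ≤ d * 2 ^ d * (R : ℝ≥0∞) ^ (d - s) := by
  refine (tsum_comp_bracket_le hd fun m => if m ≤ R then (m : ℝ≥0∞)⁻¹ ^ s else 0).trans ?_
  have hterm : ∀ n : ℕ, ((n + 1 : ℕ) : ℝ≥0∞) ^ (d - 1) *
      (if n + 1 ≤ R then ((n + 1 : ℕ) : ℝ≥0∞)⁻¹ ^ s else 0) ≤
      if n < R then (R : ℝ≥0∞) ^ (d - 1 - s) else 0 := by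
    intro n
    by_cases h : n < R
    · rw [if_pos h, if_pos (Nat.succ_le_of_lt h), pow_mul_inv_pow_of_le (by simp) (by simp) (by omega)]
      gcongr
      exact_mod_cast h
    · rw [if_neg (by omega), if_neg h, mul_zero]
  calc d * 2 ^ d * ∑' n : ℕ, ((n + 1 : ℕ) : ℝ≥0∞) ^ (d - 1) *
        (if n + 1 ≤ R then ((n + 1 : ℕ) : ℝ≥0∞)⁻¹ ^ s else 0)
      ≤ d * 2 ^ d * (R * (R : ℝ≥0∞) ^ (d - 1 - s)) := by
        rw [← tsum_ite_lt_eq_mul R]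
        exact mul_le_mul_right (ENNReal.tsum_le_tsum hterm) _
    _ = d * 2 ^ d * (R : ℝ≥0∞) ^ (d - s) := by
        rw [← pow_succ', show d - 1 - s + 1 = d - s by omega]

lemma tsum_tailWeight_le (hd : d ≠ 0) {σ : ℕ} (hσ : d < σ) {R : ℕ} (hR : 1 ≤ R) :
    ∑' z : Fin d → ℤ, tailWeight R σ z ≤ 2 * d * 2 ^ d * (R : ℝ≥0∞)⁻¹ ^ (σ - d) := by
  refine (tsum_comp_bracket_le hd fun m => if R ≤ m then (m : ℝ≥0∞)⁻¹ ^ σ else 0).trans ?_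
  have hterm : ∀ n : ℕ, ((n + 1 : ℕ) : ℝ≥0∞) ^ (d - 1) *
      (if R ≤ n + 1 then ((n + 1 : ℕ) : ℝ≥0∞)⁻¹ ^ σ else 0) ≤
      (R : ℝ≥0∞)⁻¹ ^ (σ - d - 1) * if R ≤ n + 1 then ((n + 1 : ℕ) : ℝ≥0∞)⁻¹ ^ 2 else 0 := by
    intro n
    by_cases h : R ≤ n + 1
    · rw [if_pos h, if_pos h, mul_comm, inv_pow_mul_pow_of_le (by simp) (by simp) (by omega),
        show σ - (d - 1) = σ - d - 1 + 2 by omega, pow_add]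
      gcongr
    · rw [if_neg h, if_neg h, mul_zero, mul_zero]
  have hsq : ∑' n : ℕ, (if R ≤ n + 1 then ((n + 1 : ℕ) : ℝ≥0∞)⁻¹ ^ 2 else 0) ≤ 2 * (R : ℝ≥0∞)⁻¹ :=
    (ENNReal.tsum_comp_le_tsum_of_injective (add_left_injective 1)
      fun m => if R ≤ m then (m : ℝ≥0∞)⁻¹ ^ 2 else 0).trans (tsum_inv_sq_tail_le hR)
  calc d * 2 ^ d * ∑' n : ℕ, ((n + 1 : ℕ) : ℝ≥0∞) ^ (d - 1) *
        (if R ≤ n + 1 then ((n + 1 : ℕ) : ℝ≥0∞)⁻¹ ^ σ else 0)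
      ≤ d * 2 ^ d * ((R : ℝ≥0∞)⁻¹ ^ (σ - d - 1) * (2 * (R : ℝ≥0∞)⁻¹)) := by
        refine mul_le_mul_right ((ENNReal.tsum_le_tsum hterm).trans ?_) _
        rw [ENNReal.tsum_mul_left]
        exact mul_le_mul_right hsq _
    _ = 2 * d * 2 ^ d * (R : ℝ≥0∞)⁻¹ ^ (σ - d) := by
        rw [show σ - d = σ - d - 1 + 1 by omega, pow_succ, Nat.add_sub_cancel]
        ring

lemma weight_mul_weight_le_of_bracket_le {p q : Fin d → ℤ} {M : ℕ} (hpq : bracket p ≤ bracket q)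
    (hM : M ≤ bracket p + bracket q) (s t : ℕ) :
    weight s p * weight t q ≤ 2 ^ t * (M : ℝ≥0∞)⁻¹ ^ t * ballWeight M s p + tailWeight M (s + t) p := by
  by_cases hpM : bracket p ≤ M
  · refine le_add_right ?_
    rw [ballWeight, if_pos hpM, weight, weight, mul_comm, ← mul_pow]
    gcongr
    exact inv_le_two_mul_inv (by omega)
  · refine le_add_left ?_
    rw [tailWeight, if_pos (by omega), weight, weight, weight, pow_add]
    gcongr

theorem tsum_weight_mul_weight_le (hd : d ≠ 0) {s t : ℕ} (hs : s < d) (ht : t < d)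
    (hst : d < s + t) (a b : Fin d → ℤ) :
    ∑' w, weight s (w - a) * weight t (w - b) ≤
      ((d * 2 ^ d * (2 ^ s + 2 ^ t + 4) : ℕ) : ℝ≥0∞) * weight (s + t - d) (a - b) := by
  set M := bracket (a - b)
  have hpt (w : Fin d → ℤ) : weight s (w - a) * weight t (w - b) ≤
      2 ^ t * (M : ℝ≥0∞)⁻¹ ^ t * ballWeight M s (w - a) +
        2 ^ s * (M : ℝ≥0∞)⁻¹ ^ s * ballWeight M t (w - b) +
        (tailWeight M (s + t) (w - a) + tailWeight M (s + t) (w - b)) := by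
    have hM := bracket_sub_le a b w
    rcases le_total (bracket (w - a)) (bracket (w - b)) with h | h
    · exact (weight_mul_weight_le_of_bracket_le h hM s t).trans
        (add_le_add le_self_add le_self_add)
    · rw [mul_comm]
      refine (weight_mul_weight_le_of_bracket_le (M := M) h (by omega) t s).trans ?_
      rw [add_comm t s]
      exact add_le_add le_add_self le_add_self
  have hball {k l : ℕ} (c : Fin d → ℤ) (hk : k < d) (hkl : k + l = s + t) :
      ∑' w, 2 ^ l * (M : ℝ≥0∞)⁻¹ ^ l * ballWeight M k (w - c) ≤
        d * 2 ^ d * 2 ^ l * (M : ℝ≥0∞)⁻¹ ^ (s + t - d) := by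
    rw [ENNReal.tsum_mul_left, tsum_comp_sub_right (ballWeight M k)]
    calc _ ≤ 2 ^ l * (M : ℝ≥0∞)⁻¹ ^ l * (d * 2 ^ d * (M : ℝ≥0∞) ^ (d - k)) := by
          gcongr; exact tsum_ballWeight_le hd hk M
      _ = d * 2 ^ d * 2 ^ l * ((M : ℝ≥0∞)⁻¹ ^ l * (M : ℝ≥0∞) ^ (d - k)) := by ring
      _ = _ := by
          rw [inv_pow_mul_pow_of_le (by simpa using Nat.one_le_iff_ne_zero.1 (one_le_bracket _))
            (by simp) (by omega), show l - (d - k) = s + t - d by omega]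
  have htail (c : Fin d → ℤ) :
      ∑' w, tailWeight M (s + t) (w - c) ≤ 2 * d * 2 ^ d * (M : ℝ≥0∞)⁻¹ ^ (s + t - d) :=
    (tsum_comp_sub_right _ c).trans_le (tsum_tailWeight_le hd (by omega) (one_le_bracket _))
  calc _ ≤ _ := ENNReal.tsum_le_tsum hpt
    _ = _ := by rw [ENNReal.tsum_add, ENNReal.tsum_add, ENNReal.tsum_add]
    _ ≤ d * 2 ^ d * 2 ^ t * (M : ℝ≥0∞)⁻¹ ^ (s + t - d) +
          d * 2 ^ d * 2 ^ s * (M : ℝ≥0∞)⁻¹ ^ (s + t - d) +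
          (2 * d * 2 ^ d * (M : ℝ≥0∞)⁻¹ ^ (s + t - d) + 2 * d * 2 ^ d * (M : ℝ≥0∞)⁻¹ ^ (s + t - d)) := by
        gcongr
        exacts [hball a hs rfl, hball b ht (add_comm t s), htail a, htail b]
    _ = _ := by rw [weight]; push_cast; ring

noncomputable def bondSum (G : (Fin d → ℤ) → ℝ≥0∞) (v x : Fin d → ℤ) : ℝ≥0∞ :=
  ∑' y, ∑' u, ∑' w, G u * G (w - u) * G (y - w) * G (y + v - u) * G (u - x)

lemma bondSum_le_pow_mul {G H : (Fin d → ℤ) → ℝ≥0∞} {c : ℝ≥0∞} (h : ∀ z, G z ≤ c * H z)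
    (v x : Fin d → ℤ) : bondSum G v x ≤ c ^ 5 * bondSum H v x := by
  simp only [bondSum, ← ENNReal.tsum_mul_left]
  refine ENNReal.tsum_le_tsum fun y => ENNReal.tsum_le_tsum fun u => ENNReal.tsum_le_tsum fun w => ?_
  exact (mul_le_mul' (mul_le_mul' (mul_le_mul' (mul_le_mul' (h _) (h _)) (h _)) (h _)) (h _)).trans_eq
    (by ring)

lemma bondSum_eq_of_sub_rev {G : (Fin d → ℤ) → ℝ≥0∞} (hG : ∀ p q, G (p - q) = G (q - p))
    (v x : Fin d → ℤ) :
    bondSum G v x = ∑' u, G u * G (u - x) * ∑' y, G (y + v - u) * ∑' w, G (w - y) * G (w - u) := by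
  rw [bondSum, ENNReal.tsum_comm]
  congr 1 with u
  rw [← ENNReal.tsum_mul_left]
  congr 1 with y
  rw [← ENNReal.tsum_mul_left, ← ENNReal.tsum_mul_left]
  congr 1 with w
  rw [hG y w]
  ring

lemma tsum_weight_mul_tsum_weight_le (hd : 6 < d) :
    ∃ C : ℕ, ∀ u v : Fin d → ℤ,
      ∑' y, weight (d - 2) (y + v - u) * ∑' w, weight (d - 2) (w - y) * weight (d - 2) (w - u) ≤
        C * weight (d - 6) v := by
  have hd0 : d ≠ 0 := by omega
  set C₁ := d * 2 ^ d * (2 ^ (d - 2) + 2 ^ (d - 2) + 4)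
  set C₂ := d * 2 ^ d * (2 ^ (d - 2) + 2 ^ (d - 4) + 4)
  refine ⟨C₁ * C₂, fun u v => ?_⟩
  calc _ ≤ ∑' y, weight (d - 2) (y + v - u) * (C₁ * weight (d - 4) (y - u)) := by
        gcongr with y
        refine (tsum_weight_mul_weight_le hd0 (by omega) (by omega) (by omega) y u).trans_eq ?_
        rw [show d - 2 + (d - 2) - d = d - 4 by omega]
    _ = C₁ * ∑' y, weight (d - 2) (y - (u - v)) * weight (d - 4) (y - u) := by
        rw [← ENNReal.tsum_mul_left]
        refine tsum_congr fun y => ?_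
        rw [sub_sub_eq_add_sub]
        ring
    _ ≤ C₁ * (C₂ * weight (d - 6) (u - v - u)) := by
        gcongr
        refine (tsum_weight_mul_weight_le hd0 (by omega) (by omega) (by omega) _ u).trans_eq ?_
        rw [show d - 2 + (d - 4) - d = d - 6 by omega]
    _ = _ := by
        rw [weight_sub_rev, sub_sub_cancel]
        push_cast
        ring

lemma bondSum_weight_le (hd : 6 < d) :
    ∃ C : ℕ, ∀ v x : Fin d → ℤ,
      bondSum (weight (d - 2)) v x ≤ C * weight (d - 6) v * weight (d - 4) x := by
  obtain ⟨C, hC⟩ := tsum_weight_mul_tsum_weight_le hd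
  set C₁ := d * 2 ^ d * (2 ^ (d - 2) + 2 ^ (d - 2) + 4)
  have hu (x : Fin d → ℤ) :
      ∑' u, weight (d - 2) (u - 0) * weight (d - 2) (u - x) ≤ C₁ * weight (d - 4) x := by
    refine (tsum_weight_mul_weight_le (by omega) (by omega) (by omega) (by omega) 0 x).trans_eq ?_
    rw [show d - 2 + (d - 2) - d = d - 4 by omega, weight_sub_rev, sub_zero]
  refine ⟨C * C₁, fun v x => ?_⟩
  calc bondSum (weight (d - 2)) v x
      = ∑' u, weight (d - 2) u * weight (d - 2) (u - x) * ∑' y, weight (d - 2) (y + v - u) *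
          ∑' w, weight (d - 2) (w - y) * weight (d - 2) (w - u) :=
        bondSum_eq_of_sub_rev (weight_sub_rev _) v x
    _ ≤ ∑' u, weight (d - 2) (u - 0) * weight (d - 2) (u - x) * (C * weight (d - 6) v) := by
        simp_rw [sub_zero]
        gcongr with u
        exact hC u v
    _ ≤ C₁ * weight (d - 4) x * (C * weight (d - 6) v) := by
        rw [ENNReal.tsum_mul_right]
        gcongr
        exact hu x
    _ = _ := by push_cast; ring

lemma ofReal_norm_rpow_neg {z : Fin d → ℤ} (hz : z ≠ 0) (k : ℕ) :
    ENNReal.ofReal (‖z‖ ^ (-(k : ℝ))) = (supNorm z : ℝ≥0∞)⁻¹ ^ k := by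
  have hpos : (0 : ℝ) < supNorm z := Nat.cast_pos.2 (Nat.pos_of_ne_zero (mt supNorm_eq_zero.1 hz))
  rw [norm_eq_supNorm, Real.rpow_neg hpos.le, Real.rpow_natCast, ENNReal.ofReal_inv_of_pos (by positivity),
    ENNReal.ofReal_pow hpos.le, ENNReal.ofReal_natCast, ENNReal.inv_pow]

lemma weight_le_ofReal_norm_rpow {z : Fin d → ℤ} (hz : z ≠ 0) (k : ℕ) :
    weight k z ≤ ENNReal.ofReal (‖z‖ ^ (-(k : ℝ))) := by
  rw [ofReal_norm_rpow_neg hz, weight, bracket]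
  gcongr
  exact Nat.le_succ _

lemma latPow_le_two_pow_mul_weight (z : Fin d → ℤ) (k : ℕ) :
    latPow z (-(k : ℝ)) ≤ 2 ^ k * weight k z := by
  rw [latPow]
  split_ifs with hz
  · exact zero_le
  rw [ofReal_norm_rpow_neg hz, weight, ← mul_pow]
  gcongr
  have := Nat.pos_of_ne_zero (mt supNorm_eq_zero.1 hz)
  exact inv_le_two_mul_inv (by simp only [bracket]; omega)

lemma bondSum_latPow_le (hd : 6 < d) :
    ∃ C : ℕ, ∀ v x : Fin d → ℤ,
      bondSum (fun z => latPow z ((2 : ℝ) - d)) v x ≤ C * weight (d - 6) v * weight (d - 4) x := by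
  obtain ⟨C, hC⟩ := bondSum_weight_le hd
  have h2d : (2 : ℝ) - d = -((d - 2 : ℕ) : ℝ) := by push_cast [Nat.cast_sub (by omega : 2 ≤ d)]; ring
  refine ⟨(2 ^ (d - 2)) ^ 5 * C, fun v x => ?_⟩
  calc _ ≤ (2 ^ (d - 2)) ^ 5 * bondSum (weight (d - 2)) v x :=
        bondSum_le_pow_mul (fun z => h2d ▸ latPow_le_two_pow_mul_weight z (d - 2)) v x
    _ ≤ (2 ^ (d - 2)) ^ 5 * (C * weight (d - 6) v * weight (d - 4) x) := by gcongr; exact hC v x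
    _ = _ := by push_cast; ring

lemma natCast_mul_weight_le_ofReal {k : ℕ} (hk : k ≠ 0) (C : ℕ) {ε : ℝ} (hε : 0 < ε)
    {v : Fin d → ℤ} (hv : C / ε ≤ ‖v‖) : (C : ℝ≥0∞) * weight k v ≤ ENNReal.ofReal ε := by
  have hb : (0 : ℝ) < bracket v := Nat.cast_pos.2 (one_le_bracket v)
  have hweight : weight k v ≤ ENNReal.ofReal (bracket v : ℝ)⁻¹ := by
    rw [ENNReal.ofReal_inv_of_pos hb, ENNReal.ofReal_natCast, weight]
    exact pow_le_of_le_one zero_le (ENNReal.inv_le_one.2 (by exact_mod_cast one_le_bracket v)) hk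
  have hCε : (C : ℝ) * (bracket v : ℝ)⁻¹ ≤ ε := by
    rw [← div_eq_mul_inv, div_le_iff₀ hb, ← div_le_iff₀' hε]
    refine hv.trans ?_
    rw [norm_eq_supNorm, bracket]
    push_cast
    linarith
  calc (C : ℝ≥0∞) * weight k v ≤ ENNReal.ofReal C * ENNReal.ofReal (bracket v : ℝ)⁻¹ := by
        rw [ENNReal.ofReal_natCast]; gcongr
    _ ≤ ENNReal.ofReal ε := by
        rw [← ENNReal.ofReal_mul (Nat.cast_nonneg C)]
        exact ENNReal.ofReal_le_ofReal hCε

end LatticeSum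

theorem statement6 (d : ℕ) (hd : 6 < d) :
    ∀ ε : ℝ, 0 < ε → ∃ K : ℝ, 1 ≤ K ∧
      ∀ v : Fin d → ℤ, K ≤ ‖v‖ → ∀ x : Fin d → ℤ, x ≠ 0 →
      ∑' y : Fin d → ℤ, ∑' u : Fin d → ℤ, ∑' w : Fin d → ℤ,
        latPow u ((2 : ℝ) - d) * latPow (w - u) ((2 : ℝ) - d) *
          latPow (y - w) ((2 : ℝ) - d) * latPow (y + v - u) ((2 : ℝ) - d) *
          latPow (u - x) ((2 : ℝ) - d) ≤
        ENNReal.ofReal (ε * ‖x‖ ^ ((4 : ℝ) - d)) := by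
  intro ε hε
  obtain ⟨C, hC⟩ := LatticeSum.bondSum_latPow_le hd
  refine ⟨max 1 (C / ε), le_max_left _ _, fun v hv x hx => (hC v x).trans ?_⟩
  have h4d : (4 : ℝ) - d = -((d - 4 : ℕ) : ℝ) := by push_cast [Nat.cast_sub (by omega : 4 ≤ d)]; ring
  rw [ENNReal.ofReal_mul hε.le, h4d]
  exact mul_le_mul' (LatticeSum.natCast_mul_weight_le_ofReal (by omega) C hε
    ((le_max_right _ _).trans hv)) (LatticeSum.weight_le_ofReal_norm_rpow hx _)
end

section
/- Let d > 6 be an integer. There exists a constant C = C(d) > 0 such that for every real α ∈ (0, 1/3) and every integer r ≥ 1, one has ∑_{x ∈ B_{αr}} ∑_{u ∈ B_{αr}} ∑_{v ∈ B_r} |u − x|^{2−d} |x − v|^{2−d} |v − u|^{2−d} |x|^{2−d} · max(r − |v|, 1)^{−2} ≤ C α², where terms in which any of u − x, x − v, v − u, x vanishes are omitted from the sum. -/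
open scoped ENNReal

open Finset

/-!
Split the `v`-sum at `|v| = 2r/3`. In the bulk `|v| ≤ 2r/3` the boundary weight is at most
`(r/3)^(-2)`, and the three factors `|u - x|^(2-d) |x - v|^(2-d) |v - u|^(2-d)` are bounded by the
sum of their pairwise products raised to the power `3/2` (the smallest factor is at most the
geometric mean of the other two). The exponent `3(2-d)/2` is summable over `ℤ^d` exactly when
`d > 6`, so `u` and `v` may then range over all of `ℤ^d` at the cost of a constant, and what is left
is `r^(-2) ∑_{|x| ≤ αr} |x|^(2-d) ≲ α^2`. Near the boundary, `x` and `u` lie at distance at least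
`r/3` from `v`; the boundary weight sums to `O(r^(d-1))` and the sums over `x` and `u` to
`O((αr)^2)` each, for a total of `O(α^4 r^(7-d)) ≤ O(α^2)` since `d ≥ 7`.

All lattice sums are estimated by grouping the points by their sup norm `n`: the shell
`|w| = n ≥ 1` holds at most `2d(2n+1)^(d-1)` points.
-/

namespace ENNReal

lemma mul_mul_le_rpow_three_halves_of_le_of_le {x y z : ℝ≥0∞} (hzx : z ≤ x) (hzy : z ≤ y) :
    x * y * z ≤ (x * y) ^ (3 / 2 : ℝ) := by
  have hz : z ≤ (x * y) ^ (1 / 2 : ℝ) :=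
    calc z = (z * z) ^ (1 / 2 : ℝ) := by
          rw [mul_rpow_of_nonneg _ _ (by norm_num), ← rpow_add_of_nonneg _ _ (by norm_num)
            (by norm_num)]
          norm_num
      _ ≤ (x * y) ^ (1 / 2 : ℝ) := by gcongr
  calc x * y * z ≤ x * y * (x * y) ^ (1 / 2 : ℝ) := by gcongr
    _ = (x * y) ^ (3 / 2 : ℝ) := by
      rw [show (3 / 2 : ℝ) = 1 + 1 / 2 by norm_num,
        rpow_add_of_nonneg _ _ zero_le_one (by norm_num), rpow_one]

lemma mul_mul_le_pairwise_rpow_three_halves (x y z : ℝ≥0∞) :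
    x * y * z ≤ (x * y) ^ (3 / 2 : ℝ) + (y * z) ^ (3 / 2 : ℝ) + (x * z) ^ (3 / 2 : ℝ) := by
  have hyzx : x * y * z = y * z * x := by ring
  have hxzy : x * y * z = x * z * y := by ring
  have hfirst : (x * y) ^ (3 / 2 : ℝ) ≤ (x * y) ^ (3 / 2 : ℝ) + (y * z) ^ (3 / 2 : ℝ) +
      (x * z) ^ (3 / 2 : ℝ) := le_self_add.trans le_self_add
  have hsecond : (y * z) ^ (3 / 2 : ℝ) ≤ (x * y) ^ (3 / 2 : ℝ) + (y * z) ^ (3 / 2 : ℝ) +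
      (x * z) ^ (3 / 2 : ℝ) := le_add_self.trans le_self_add
  rcases le_total z x with hzx | hxz <;> rcases le_total z y with hzy | hyz
  · exact (mul_mul_le_rpow_three_halves_of_le_of_le hzx hzy).trans hfirst
  · rw [hxzy]
    exact (mul_mul_le_rpow_three_halves_of_le_of_le (hyz.trans hzx) hyz).trans le_add_self
  · rw [hyzx]
    exact (mul_mul_le_rpow_three_halves_of_le_of_le (hxz.trans hzy) hxz).trans hsecond
  · rcases le_total x y with hxy | hyx
    · rw [hyzx]
      exact (mul_mul_le_rpow_three_halves_of_le_of_le hxy hxz).trans hsecond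
    · rw [hxzy]
      exact (mul_mul_le_rpow_three_halves_of_le_of_le hyx hyz).trans le_add_self

end ENNReal

lemma tsum_tsum_triangle_pairs {G : Type*} [AddCommGroup G] (f : G → ℝ≥0∞) (x : G) :
    ∑' u, ∑' v, (f (u - x) * f (x - v) + f (x - v) * f (v - u) + f (u - x) * f (v - u)) =
      3 * (∑' w, f w) ^ 2 := by
  have hright : ∀ y, ∑' w, f (w - y) = ∑' w, f w := fun y => (Equiv.subRight y).tsum_eq f
  have hleft : ∀ y, ∑' w, f (y - w) = ∑' w, f w := fun y => (Equiv.subLeft y).tsum_eq f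
  simp only [ENNReal.tsum_add]
  rw [ENNReal.tsum_comm (f := fun u v => f (x - v) * f (v - u))]
  simp only [ENNReal.tsum_mul_left, ENNReal.tsum_mul_right, hright, hleft]
  ring

lemma sum_range_max_sub_one_rpow_neg_two_le (r : ℕ) :
    ∑ n ∈ range r, (max ((r : ℝ) - (n + 1 : ℕ)) 1) ^ (-2 : ℝ) ≤ 3 := by
  let f : ℕ → ℝ := fun s => (max (s : ℝ) 1) ^ (-2 : ℝ)
  have hreflect : ∑ n ∈ range r, (max ((r : ℝ) - (n + 1 : ℕ)) 1) ^ (-2 : ℝ) =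
      ∑ n ∈ range r, f (r - 1 - n) := by
    refine sum_congr rfl fun n hn => ?_
    simp only [f, Nat.sub_sub, add_comm 1 n, Nat.cast_sub (mem_range.1 hn : n + 1 ≤ r)]
  have hsq : ∀ s ∈ Ioo 0 (r + 1), f s = ((s : ℝ) ^ 2)⁻¹ := fun s hs => by
    have : (1 : ℝ) ≤ s := by exact_mod_cast (mem_Ioo.1 hs).1
    simp only [f, max_eq_left this, Real.rpow_neg (Nat.cast_nonneg s)]
    norm_cast
  rw [hreflect, sum_range_reflect f r]
  calc ∑ n ∈ range r, f n ≤ ∑ n ∈ range (r + 1), f n :=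
        sum_le_sum_of_subset_of_nonneg (range_subset_range.2 r.le_succ)
          fun _ _ _ => by positivity
    _ ≤ 3 := by
        rw [range_eq_Ico, sum_eq_sum_Ico_succ_bot r.succ_pos, Ico_add_one_left_eq_Ioo,
          sum_congr rfl hsq]
        have := sum_Ioo_inv_sq_le (α := ℝ) 0 (r + 1)
        norm_num [f] at this ⊢
        linarith

lemma boundary_scaling_le {d : ℝ} (hd : 7 ≤ d) {r α : ℝ} (hr : 1 ≤ r) (hα : 0 ≤ α) (hα1 : α ≤ 1) :
    ((r / 3) ^ (2 - d)) ^ 2 * (2 * α * r) ^ 2 * (α * r) ^ 2 * r ^ (d - 1) ≤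
      4 * (3 ^ (d - 2)) ^ 2 * α ^ 2 := by
  have hr0 : 0 < r := by linarith
  have hscale : (r / 3) ^ (2 - d) = 3 ^ (d - 2) * r ^ (2 - d) := by
    rw [Real.div_rpow hr0.le (by norm_num), show 2 - d = -(d - 2) by ring,
      Real.rpow_neg (by norm_num : (0 : ℝ) ≤ 3), div_inv_eq_mul, mul_comm]
  have hpow : (r ^ (2 - d)) ^ 2 * r ^ 2 * r ^ 2 * r ^ (d - 1) ≤ 1 := by
    rw [← Real.rpow_two, ← Real.rpow_two r, ← Real.rpow_mul hr0.le, ← Real.rpow_add hr0,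
      ← Real.rpow_add hr0, ← Real.rpow_add hr0]
    exact Real.rpow_le_one_of_one_le_of_nonpos hr (by linarith)
  have hα4 : α ^ 2 * α ^ 2 ≤ α ^ 2 := mul_le_of_le_one_left (by positivity) (by nlinarith)
  calc ((r / 3) ^ (2 - d)) ^ 2 * (2 * α * r) ^ 2 * (α * r) ^ 2 * r ^ (d - 1)
      = 4 * (3 ^ (d - 2)) ^ 2 * (α ^ 2 * α ^ 2) *
          ((r ^ (2 - d)) ^ 2 * r ^ 2 * r ^ 2 * r ^ (d - 1)) := by rw [hscale]; ring
    _ ≤ 4 * (3 ^ (d - 2)) ^ 2 * α ^ 2 * 1 := by gcongr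
    _ = 4 * (3 ^ (d - 2)) ^ 2 * α ^ 2 := mul_one _

section LatticeSums

variable {d : ℕ}

def supNatAbs (w : Fin d → ℤ) : ℕ := univ.sup fun i => (w i).natAbs

lemma norm_eq_supNatAbs (w : Fin d → ℤ) : ‖w‖ = supNatAbs w := by
  have : ‖w‖₊ = supNatAbs w := by simp [Pi.nnnorm_def, supNatAbs, NNReal.natCast_natAbs]
  simpa using congrArg NNReal.toReal this

lemma supNatAbs_eq_zero {w : Fin d → ℤ} : supNatAbs w = 0 ↔ w = 0 := by
  simp [supNatAbs, funext_iff]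

lemma supNatAbs_le_iff_mem_Icc {w : Fin d → ℤ} {n : ℕ} :
    supNatAbs w ≤ n ↔ w ∈ Icc (-(n : Fin d → ℤ)) n := by
  simp only [supNatAbs, Finset.sup_le_iff, mem_univ, true_implies, mem_Icc, Pi.le_def,
    Pi.neg_apply, Pi.natCast_apply, ← forall_and]
  exact forall_congr' fun i => by omega

lemma card_Icc_neg_natCast (n : ℕ) : #(Icc (-(n : Fin d → ℤ)) n) = (2 * n + 1) ^ d := by
  simp only [Pi.card_Icc, Pi.neg_apply, Pi.natCast_apply, Int.card_Icc, prod_const, card_univ,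
    Fintype.card_fin]
  congr 1
  omega

lemma card_supNatAbs_fiber_le {n : ℕ} (hn : 1 ≤ n) :
    #({w ∈ Icc (-(n : Fin d → ℤ)) n | supNatAbs w = n}) ≤ 2 * d * (2 * n + 1) ^ (d - 1) := by
  obtain ⟨m, rfl⟩ : ∃ m, n = m + 1 := ⟨n - 1, by omega⟩
  have hsub : {w ∈ Icc (-((m + 1 : ℕ) : Fin d → ℤ)) (m + 1 : ℕ) | supNatAbs w = m + 1} ⊆
      Icc (-((m + 1 : ℕ) : Fin d → ℤ)) (m + 1 : ℕ) \ Icc (-(m : Fin d → ℤ)) m := by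
    intro w hw
    simp only [mem_filter] at hw
    rw [mem_sdiff, ← supNatAbs_le_iff_mem_Icc, ← supNatAbs_le_iff_mem_Icc]
    omega
  have hIcc : Icc (-(m : Fin d → ℤ)) m ⊆ Icc (-((m + 1 : ℕ) : Fin d → ℤ)) (m + 1 : ℕ) := by
    intro w hw
    rw [← supNatAbs_le_iff_mem_Icc] at hw ⊢
    omega
  refine (card_le_card hsub).trans ?_
  rw [card_sdiff_of_subset hIcc, card_Icc_neg_natCast, card_Icc_neg_natCast]
  zify [Nat.pow_le_pow_left (show 2 * m + 1 ≤ 2 * (m + 1) + 1 by omega) d]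
  have key := abs_pow_sub_pow_le (2 * ((m : ℤ) + 1) + 1) (2 * m + 1) d
  have hab : (2 * (m : ℤ) + 1) ^ d ≤ (2 * ((m : ℤ) + 1) + 1) ^ d :=
    pow_le_pow_left₀ (by positivity) (by omega) d
  rw [abs_of_nonneg (sub_nonneg.2 hab), abs_of_nonneg (by positivity : (0 : ℤ) ≤ 2 * (m + 1) + 1),
    abs_of_nonneg (by positivity : (0 : ℤ) ≤ 2 * m + 1), max_eq_left (by omega),
    show (2 * ((m : ℤ) + 1) + 1 - (2 * m + 1)) = 2 by ring, abs_two] at key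
  linarith

lemma tsum_supNatAbs_fiber (f : ℕ → ℝ≥0∞) (n : ℕ) :
    ∑' w : (supNatAbs (d := d)) ⁻¹' {n}, f (supNatAbs (w : Fin d → ℤ)) =
      #({w ∈ Icc (-(n : Fin d → ℤ)) n | supNatAbs w = n}) * f n := by
  have hfiber : supNatAbs ⁻¹' {n} = (({w ∈ Icc (-(n : Fin d → ℤ)) n | supNatAbs w = n} :
      Finset (Fin d → ℤ)) : Set (Fin d → ℤ)) := by
    ext w
    simp only [Set.mem_preimage, Set.mem_singleton_iff, coe_filter, ← supNatAbs_le_iff_mem_Icc,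
      Set.mem_ofPred_eq]
    omega
  rw [hfiber, Finset.tsum_subtype' _ (fun w => f (supNatAbs w)),
    sum_congr rfl fun w hw => by rw [(mem_filter.1 hw).2], sum_const, nsmul_eq_mul]

lemma tsum_comp_supNatAbs_le (f : ℕ → ℝ≥0∞) :
    ∑' w : Fin d → ℤ, f (supNatAbs w) ≤
      f 0 + ∑' n : ℕ, ENNReal.ofReal (2 * d * (3 * (n + 1)) ^ ((d : ℝ) - 1)) * f (n + 1) := by
  rw [← ENNReal.tsum_fiberwise _ supNatAbs, tsum_eq_zero_add' ENNReal.summable]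
  simp only [tsum_supNatAbs_fiber]
  refine add_le_add ?_ (ENNReal.tsum_le_tsum fun n => ?_)
  · calc (#({w ∈ Icc (-((0 : ℕ) : Fin d → ℤ)) (0 : ℕ) | supNatAbs w = 0}) : ℝ≥0∞) * f 0
        ≤ 1 * f 0 := by
          gcongr
          exact_mod_cast (card_filter_le _ _).trans (by simp)
      _ = f 0 := one_mul _
  · gcongr
    rw [← ENNReal.ofReal_natCast]
    gcongr
    refine (Nat.cast_le.2 (card_supNatAbs_fiber_le n.succ_pos)).trans ?_
    -- the natural exponent `d - 1` truncates at `d = 0`, where the shell bound is `0`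
    rcases Nat.eq_zero_or_pos d with rfl | hd
    · simp
    rw [show (d : ℝ) - 1 = ((d - 1 : ℕ) : ℝ) by rw [Nat.cast_sub hd]; simp, Real.rpow_natCast]
    push_cast
    gcongr
    linarith

lemma tsum_ball_comp_supNatAbs_le (f : ℕ → ℝ≥0∞) (R : ℝ) :
    ∑' w : {w : Fin d → ℤ // ‖w‖ ≤ R}, f (supNatAbs w.1) ≤
      f 0 + ∑ n ∈ range ⌊R⌋₊,
        ENNReal.ofReal (2 * d * (3 * (n + 1)) ^ ((d : ℝ) - 1)) * f (n + 1) := by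
  let F : ℕ → ℝ≥0∞ := fun n => if n ≤ ⌊R⌋₊ then f n else 0
  calc ∑' w : {w : Fin d → ℤ // ‖w‖ ≤ R}, f (supNatAbs w.1)
      = ∑' w : Fin d → ℤ, {w | ‖w‖ ≤ R}.indicator (f ∘ supNatAbs) w :=
        _root_.tsum_subtype {w : Fin d → ℤ | ‖w‖ ≤ R} (f ∘ supNatAbs)
    _ ≤ ∑' w : Fin d → ℤ, F (supNatAbs w) := by
        refine ENNReal.tsum_le_tsum fun w => ?_
        by_cases hw : ‖w‖ ≤ R
        · rw [norm_eq_supNatAbs] at hw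
          simp [F, Set.indicator, norm_eq_supNatAbs, hw, Nat.le_floor hw]
        · simp [Set.indicator, hw]
    _ ≤ F 0 + ∑' n : ℕ, ENNReal.ofReal (2 * d * (3 * (n + 1)) ^ ((d : ℝ) - 1)) * F (n + 1) :=
        tsum_comp_supNatAbs_le F
    _ = f 0 + ∑ n ∈ range ⌊R⌋₊,
          ENNReal.ofReal (2 * d * (3 * (n + 1)) ^ ((d : ℝ) - 1)) * f (n + 1) := by
        rw [tsum_eq_sum (s := range ⌊R⌋₊) fun n hn => by simp_all [F]]
        refine congrArg₂ _ (if_pos (Nat.zero_le _)) (sum_congr rfl fun n hn => ?_)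
        simp only [F, if_pos (Nat.succ_le_of_lt (mem_range.1 hn))]

lemma latPow_eq_supNatAbs (w : Fin d → ℤ) (a : ℝ) :
    latPow w a = if supNatAbs w = 0 then 0 else ENNReal.ofReal ((supNatAbs w : ℝ) ^ a) := by
  simp [latPow, supNatAbs_eq_zero, norm_eq_supNatAbs]

lemma shell_weight_mul_rpow {t : ℝ} (ht : 0 < t) (a : ℝ) :
    2 * d * (3 * t) ^ ((d : ℝ) - 1) * t ^ a =
      2 * d * 3 ^ ((d : ℝ) - 1) * t ^ ((d : ℝ) - 1 + a) := by
  rw [Real.mul_rpow (by norm_num) ht.le, Real.rpow_add ht]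
  ring

lemma tsum_latPow_ne_top {a : ℝ} (ha : a < -d) : ∑' w : Fin d → ℤ, latPow w a ≠ ∞ := by
  set g : ℕ → ℝ := fun n => 2 * d * 3 ^ ((d : ℝ) - 1) * ((n + 1 : ℕ) : ℝ) ^ ((d : ℝ) - 1 + a)
  have hg : Summable g :=
    (((summable_nat_add_iff 1).2 (Real.summable_nat_rpow.2 (by linarith))).mul_left _)
  refine ne_top_of_le_ne_top (b := ENNReal.ofReal (∑' n, g n)) ENNReal.ofReal_ne_top ?_
  rw [ENNReal.ofReal_tsum_of_nonneg (fun n => by positivity) hg]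
  simp only [latPow_eq_supNatAbs]
  refine (tsum_comp_supNatAbs_le
    fun n => if n = 0 then 0 else ENNReal.ofReal ((n : ℝ) ^ a)).trans ?_
  rw [if_pos rfl, zero_add]
  refine ENNReal.tsum_le_tsum fun n => ?_
  rw [if_neg n.succ_ne_zero, ← ENNReal.ofReal_mul (by positivity), Nat.cast_succ,
    shell_weight_mul_rpow (by positivity)]
  simp [g]

lemma exists_tsum_latPow_ball_le {a : ℝ} (ha : 0 ≤ (d : ℝ) - 1 + a) :
    ∃ C, 0 ≤ C ∧ ∀ R : ℝ, 0 ≤ R →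
      ∑' w : {w : Fin d → ℤ // ‖w‖ ≤ R}, latPow w.1 a ≤ ENNReal.ofReal (C * R ^ ((d : ℝ) + a)) := by
  set C : ℝ := 2 * d * 3 ^ ((d : ℝ) - 1)
  refine ⟨C, by positivity, fun R hR => ?_⟩
  simp only [latPow_eq_supNatAbs]
  refine (tsum_ball_comp_supNatAbs_le
    (fun n => if n = 0 then 0 else ENNReal.ofReal ((n : ℝ) ^ a)) R).trans ?_
  calc _ ≤ ∑ n ∈ range ⌊R⌋₊, ENNReal.ofReal (C * R ^ ((d : ℝ) - 1 + a)) := by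
        rw [if_pos rfl, zero_add]
        refine sum_le_sum fun n hn => ?_
        rw [if_neg n.succ_ne_zero, ← ENNReal.ofReal_mul (by positivity), Nat.cast_succ,
          shell_weight_mul_rpow (by positivity)]
        gcongr
        exact_mod_cast (Nat.cast_le.2 (mem_range.1 hn)).trans (Nat.floor_le hR)
    _ ≤ ENNReal.ofReal (C * R ^ ((d : ℝ) + a)) := by
        rw [sum_const, card_range, nsmul_eq_mul, ← ENNReal.ofReal_natCast,
          ← ENNReal.ofReal_mul (by positivity)]
        apply ENNReal.ofReal_le_ofReal
        calc (⌊R⌋₊ : ℝ) * (C * R ^ ((d : ℝ) - 1 + a)) ≤ R * (C * R ^ ((d : ℝ) - 1 + a)) := by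
              gcongr; exact Nat.floor_le hR
          _ = C * R ^ ((d : ℝ) + a) := by
              rw [show (d : ℝ) + a = 1 + ((d : ℝ) - 1 + a) by ring,
                Real.rpow_one_add' hR (by linarith)]
              ring

noncomputable def boundaryWeight (R : ℝ) (v : Fin d → ℤ) : ℝ≥0∞ :=
  ENNReal.ofReal ((max (R - ‖v‖) 1) ^ (-2 : ℝ))

lemma exists_tsum_boundaryWeight_le (hd : 1 ≤ d) :
    ∃ C, 0 ≤ C ∧ ∀ r : ℕ, 1 ≤ r →
      ∑' v : {v : Fin d → ℤ // ‖v‖ ≤ (r : ℝ)}, boundaryWeight r v.1 ≤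
        ENNReal.ofReal (C * (r : ℝ) ^ ((d : ℝ) - 1)) := by
  refine ⟨1 + 6 * d * 3 ^ ((d : ℝ) - 1), by positivity, fun r hr => ?_⟩
  have hd' : (0 : ℝ) ≤ (d : ℝ) - 1 := by rw [sub_nonneg]; exact_mod_cast hd
  let M : ℕ → ℝ := fun n => (max ((r : ℝ) - n) 1) ^ (-2 : ℝ)
  have hweight : ∀ v : Fin d → ℤ, boundaryWeight r v = ENNReal.ofReal (M (supNatAbs v)) :=
    fun v => by simp only [boundaryWeight, norm_eq_supNatAbs, M]
  simp only [hweight]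
  refine (tsum_ball_comp_supNatAbs_le (fun n => ENNReal.ofReal (M n)) r).trans ?_
  rw [Nat.floor_natCast]
  calc _ ≤ ENNReal.ofReal 1 + ∑ n ∈ range r,
        ENNReal.ofReal (2 * d * (3 * r) ^ ((d : ℝ) - 1) * M (n + 1)) := by
        gcongr with n hn
        · exact Real.rpow_le_one_of_one_le_of_nonpos (le_max_right _ _) (by norm_num)
        · rw [← ENNReal.ofReal_mul (by positivity)]
          gcongr
          exact_mod_cast mem_range.1 hn
    _ ≤ ENNReal.ofReal ((1 + 6 * d * 3 ^ ((d : ℝ) - 1)) * (r : ℝ) ^ ((d : ℝ) - 1)) := by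
        rw [← ENNReal.ofReal_sum_of_nonneg fun n _ => by positivity, ← mul_sum,
          ← ENNReal.ofReal_add zero_le_one (by positivity)]
        apply ENNReal.ofReal_le_ofReal
        have hr1 : (1 : ℝ) ≤ (r : ℝ) ^ ((d : ℝ) - 1) :=
          Real.one_le_rpow (by exact_mod_cast hr) hd'
        have hsum := sum_range_max_sub_one_rpow_neg_two_le r
        rw [Real.mul_rpow (by norm_num) (by positivity)]
        nlinarith [show (0 : ℝ) ≤ 2 * d * 3 ^ ((d : ℝ) - 1) * (r : ℝ) ^ ((d : ℝ) - 1) by positivity]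

lemma latPow_rpow (w : Fin d → ℤ) (a : ℝ) {p : ℝ} (hp : 0 < p) :
    latPow w a ^ p = latPow w (a * p) := by
  unfold latPow
  split_ifs
  · exact ENNReal.zero_rpow_of_pos hp
  · rw [ENNReal.ofReal_rpow_of_nonneg (by positivity) hp.le, ← Real.rpow_mul (norm_nonneg _)]

lemma latPow_le_ofReal_rpow {w : Fin d → ℤ} {a c : ℝ} (ha : a ≤ 0) (hc : 0 < c) (hcw : c ≤ ‖w‖) :
    latPow w a ≤ ENNReal.ofReal (c ^ a) := by
  rw [latPow, if_neg (by rintro rfl; rw [norm_zero] at hcw; linarith)]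
  exact ENNReal.ofReal_le_ofReal (Real.rpow_le_rpow_of_nonpos hc hcw ha)

noncomputable def edgePairSum (a : ℝ) (x u v : Fin d → ℤ) : ℝ≥0∞ :=
  latPow (u - x) a * latPow (x - v) a + latPow (x - v) a * latPow (v - u) a +
    latPow (u - x) a * latPow (v - u) a

lemma latPow_mul_latPow_mul_latPow_le (a : ℝ) (x u v : Fin d → ℤ) :
    latPow (u - x) a * latPow (x - v) a * latPow (v - u) a ≤ edgePairSum (a * (3 / 2)) x u v := by
  simp only [edgePairSum, ← latPow_rpow _ _ (by norm_num : (0 : ℝ) < 3 / 2),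
    ← ENNReal.mul_rpow_of_nonneg _ _ (by norm_num : (0 : ℝ) ≤ 3 / 2)]
  exact ENNReal.mul_mul_le_pairwise_rpow_three_halves _ _ _

noncomputable def bulkTerm (a R : ℝ) (x u v : Fin d → ℤ) : ℝ≥0∞ :=
  ENNReal.ofReal ((R / 3) ^ (-2 : ℝ)) * edgePairSum (a * (3 / 2)) x u v * latPow x a

noncomputable def boundaryTerm (a R : ℝ) (x u v : Fin d → ℤ) : ℝ≥0∞ :=
  ENNReal.ofReal ((R / 3) ^ a) ^ 2 * latPow (u - x) a * latPow x a * boundaryWeight R v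

lemma summand_le_bulkTerm_add_boundaryTerm {a R : ℝ} (ha : a ≤ 0) (hR : 0 < R)
    {x u v : Fin d → ℤ} (hx : ‖x‖ ≤ R / 3) (hu : ‖u‖ ≤ R / 3) :
    latPow (u - x) a * latPow (x - v) a * latPow (v - u) a * latPow x a * boundaryWeight R v ≤
      bulkTerm a R x u v + boundaryTerm a R x u v := by
  by_cases hv : ‖v‖ ≤ 2 * R / 3
  · refine le_add_right ?_
    have hweight : boundaryWeight R v ≤ ENNReal.ofReal ((R / 3) ^ (-2 : ℝ)) :=
      ENNReal.ofReal_le_ofReal (Real.rpow_le_rpow_of_nonpos (by positivity)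
        ((by linarith : R / 3 ≤ R - ‖v‖).trans (le_max_left _ _)) (by norm_num))
    calc _ ≤ edgePairSum (a * (3 / 2)) x u v * latPow x a *
          ENNReal.ofReal ((R / 3) ^ (-2 : ℝ)) := by
          gcongr
          exact latPow_mul_latPow_mul_latPow_le a x u v
      _ = bulkTerm a R x u v := by rw [bulkTerm]; ring
  · refine le_add_left ?_
    push Not at hv
    have hxv : latPow (x - v) a ≤ ENNReal.ofReal ((R / 3) ^ a) :=
      latPow_le_ofReal_rpow ha (by positivity)
        (by rw [norm_sub_rev]; linarith [norm_sub_norm_le v x])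
    have hvu : latPow (v - u) a ≤ ENNReal.ofReal ((R / 3) ^ a) :=
      latPow_le_ofReal_rpow ha (by positivity) (by linarith [norm_sub_norm_le v u])
    calc _ ≤ latPow (u - x) a * ENNReal.ofReal ((R / 3) ^ a) * ENNReal.ofReal ((R / 3) ^ a) *
          latPow x a * boundaryWeight R v := by gcongr
      _ = boundaryTerm a R x u v := by rw [boundaryTerm]; ring

lemma tsum_ball_latPow_sub_le {ρ : ℝ} (a : ℝ) {x : Fin d → ℤ} (hx : ‖x‖ ≤ ρ) :
    ∑' u : {u : Fin d → ℤ // ‖u‖ ≤ ρ}, latPow (u.1 - x) a ≤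
      ∑' w : {w : Fin d → ℤ // ‖w‖ ≤ 2 * ρ}, latPow w.1 a :=
  ENNReal.tsum_comp_le_tsum_of_injective
    (f := fun u : {u : Fin d → ℤ // ‖u‖ ≤ ρ} =>
      (⟨u.1 - x, (norm_sub_le _ _).trans (by linarith [u.2])⟩ : {w : Fin d → ℤ // ‖w‖ ≤ 2 * ρ}))
    (fun u u' h => Subtype.ext (sub_left_injective (congrArg Subtype.val h)))
    fun w => latPow w.1 a

lemma tsum_tsum_edgePairSum (a : ℝ) (x : Fin d → ℤ) :
    ∑' u, ∑' v, edgePairSum a x u v = 3 * (∑' w : Fin d → ℤ, latPow w a) ^ 2 :=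
  tsum_tsum_triangle_pairs (latPow · a) x

lemma exists_tsum_bulkTerm_le (hd : 6 < d) :
    ∃ C, 0 ≤ C ∧ ∀ α R : ℝ, 0 ≤ α → 0 < R →
      ∑' x : {x : Fin d → ℤ // ‖x‖ ≤ α * R}, ∑' u : {u : Fin d → ℤ // ‖u‖ ≤ α * R},
        ∑' v : {v : Fin d → ℤ // ‖v‖ ≤ R}, bulkTerm (2 - d) R x.1 u.1 v.1 ≤
      ENNReal.ofReal (C * α ^ 2) := by
  have hd7 : (7 : ℝ) ≤ d := by exact_mod_cast hd
  obtain ⟨C₁, hC₁, hball⟩ := exists_tsum_latPow_ball_le (d := d) (a := 2 - d) (by linarith)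
  set S := ∑' w : Fin d → ℤ, latPow w ((2 - d) * (3 / 2))
  obtain ⟨s, hs, hSs⟩ : ∃ s : ℝ, 0 ≤ s ∧ S = ENNReal.ofReal s :=
    ⟨S.toReal, ENNReal.toReal_nonneg,
      (ENNReal.ofReal_toReal (tsum_latPow_ne_top (by linarith))).symm⟩
  refine ⟨27 * s ^ 2 * C₁, by positivity, fun α R hα hR => ?_⟩
  calc _ ≤ ∑' x : {x : Fin d → ℤ // ‖x‖ ≤ α * R}, ∑' u : Fin d → ℤ, ∑' v : Fin d → ℤ,
          bulkTerm (2 - d) R x.1 u v := by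
        refine ENNReal.tsum_le_tsum fun x => ?_
        exact (ENNReal.tsum_le_tsum fun u => ENNReal.tsum_comp_le_tsum_of_injective
          Subtype.val_injective _).trans
          (ENNReal.tsum_comp_le_tsum_of_injective Subtype.val_injective _)
    _ = ENNReal.ofReal ((R / 3) ^ (-2 : ℝ)) * (3 * S ^ 2) *
          ∑' x : {x : Fin d → ℤ // ‖x‖ ≤ α * R}, latPow x.1 (2 - d) := by
        rw [← ENNReal.tsum_mul_left]
        refine tsum_congr fun x => ?_
        simp only [bulkTerm, ENNReal.tsum_mul_right, ENNReal.tsum_mul_left,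
          tsum_tsum_edgePairSum, S]
    _ ≤ ENNReal.ofReal ((R / 3) ^ (-2 : ℝ)) * (3 * S ^ 2) *
          ENNReal.ofReal (C₁ * (α * R) ^ ((d : ℝ) + (2 - d))) := by
        gcongr
        exact hball _ (by positivity)
    _ = ENNReal.ofReal (27 * s ^ 2 * C₁ * α ^ 2) := by
        rw [hSs, ← ENNReal.ofReal_pow hs,
          ← ENNReal.ofReal_ofNat 3, ← ENNReal.ofReal_mul (by norm_num),
          ← ENNReal.ofReal_mul (by positivity), ← ENNReal.ofReal_mul (by positivity),
          show (d : ℝ) + (2 - d) = 2 by ring, Real.rpow_two, Real.rpow_neg (by positivity),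
          Real.rpow_two]
        congr 1
        field_simp
        ring

lemma exists_tsum_boundaryTerm_le (hd : 6 < d) :
    ∃ C, 0 ≤ C ∧ ∀ (α : ℝ) (r : ℕ), 0 ≤ α → α ≤ 1 → 1 ≤ r →
      ∑' x : {x : Fin d → ℤ // ‖x‖ ≤ α * r}, ∑' u : {u : Fin d → ℤ // ‖u‖ ≤ α * r},
        ∑' v : {v : Fin d → ℤ // ‖v‖ ≤ (r : ℝ)}, boundaryTerm (2 - d) r x.1 u.1 v.1 ≤
      ENNReal.ofReal (C * α ^ 2) := by
  have hd7 : (7 : ℝ) ≤ d := by exact_mod_cast hd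
  obtain ⟨C₁, hC₁, hball⟩ := exists_tsum_latPow_ball_le (d := d) (a := 2 - d) (by linarith)
  obtain ⟨C₂, hC₂, hweight⟩ := exists_tsum_boundaryWeight_le (d := d) (by omega)
  simp only [show (d : ℝ) + (2 - d) = 2 by ring, Real.rpow_two] at hball
  refine ⟨4 * (3 ^ ((d : ℝ) - 2)) ^ 2 * C₁ ^ 2 * C₂, by positivity, fun α r hα hα1 hr => ?_⟩
  have hr1 : (1 : ℝ) ≤ r := by exact_mod_cast hr
  set ρ := α * (r : ℝ)
  have hρ : 0 ≤ ρ := by positivity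
  set c := ENNReal.ofReal (((r : ℝ) / 3) ^ ((2 : ℝ) - d)) ^ 2 with hc
  calc _ ≤ ∑' x : {x : Fin d → ℤ // ‖x‖ ≤ ρ}, ∑' u : {u : Fin d → ℤ // ‖u‖ ≤ ρ},
          c * latPow (u.1 - x.1) (2 - d) * latPow x.1 (2 - d) *
            ENNReal.ofReal (C₂ * (r : ℝ) ^ ((d : ℝ) - 1)) := by
        gcongr with x u
        simp only [boundaryTerm, ENNReal.tsum_mul_left]
        gcongr
        exact hweight r hr
    _ ≤ ∑' x : {x : Fin d → ℤ // ‖x‖ ≤ ρ}, c * ENNReal.ofReal (C₁ * (2 * ρ) ^ 2) *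
          latPow x.1 (2 - d) * ENNReal.ofReal (C₂ * (r : ℝ) ^ ((d : ℝ) - 1)) := by
        gcongr with x
        simp only [ENNReal.tsum_mul_right, ENNReal.tsum_mul_left]
        gcongr
        exact (tsum_ball_latPow_sub_le _ x.2).trans (hball _ (by positivity))
    _ ≤ c * ENNReal.ofReal (C₁ * (2 * ρ) ^ 2) * ENNReal.ofReal (C₁ * ρ ^ 2) *
          ENNReal.ofReal (C₂ * (r : ℝ) ^ ((d : ℝ) - 1)) := by
        simp only [ENNReal.tsum_mul_right, ENNReal.tsum_mul_left]
        gcongr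
        exact hball ρ hρ
    _ ≤ ENNReal.ofReal (4 * (3 ^ ((d : ℝ) - 2)) ^ 2 * C₁ ^ 2 * C₂ * α ^ 2) := by
        rw [hc, ← ENNReal.ofReal_pow (by positivity), ← ENNReal.ofReal_mul (by positivity),
          ← ENNReal.ofReal_mul (by positivity), ← ENNReal.ofReal_mul (by positivity)]
        apply ENNReal.ofReal_le_ofReal
        have := boundary_scaling_le hd7 hr1 hα hα1
        calc _ = C₁ ^ 2 * C₂ * (((r / 3) ^ (2 - (d : ℝ))) ^ 2 * (2 * α * r) ^ 2 * (α * r) ^ 2 *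
              (r : ℝ) ^ ((d : ℝ) - 1)) := by ring
          _ ≤ C₁ ^ 2 * C₂ * (4 * (3 ^ ((d : ℝ) - 2)) ^ 2 * α ^ 2) := by gcongr
          _ = _ := by ring

end LatticeSums

theorem statement13 (d : ℕ) (hd : 6 < d) :
    ∃ C : ℝ, 0 < C ∧ ∀ α : ℝ, 0 < α → α < 1 / 3 → ∀ r : ℕ, 1 ≤ r →
      ∑' x : {x : Fin d → ℤ // ‖x‖ ≤ α * r},
      ∑' u : {u : Fin d → ℤ // ‖u‖ ≤ α * r},
      ∑' v : {v : Fin d → ℤ // ‖v‖ ≤ (r : ℝ)},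
        latPow (u.1 - x.1) ((2 : ℝ) - d) * latPow (x.1 - v.1) ((2 : ℝ) - d) *
          latPow (v.1 - u.1) ((2 : ℝ) - d) * latPow x.1 ((2 : ℝ) - d) *
          ENNReal.ofReal ((max ((r : ℝ) - ‖v.1‖) 1) ^ (-2 : ℝ)) ≤
        ENNReal.ofReal (C * α ^ 2) := by
  obtain ⟨C₁, hC₁, hbulk⟩ := exists_tsum_bulkTerm_le hd
  obtain ⟨C₂, hC₂, hboundary⟩ := exists_tsum_boundaryTerm_le hd
  refine ⟨C₁ + C₂ + 1, by positivity, fun α hα hα3 r hr => ?_⟩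
  have hr0 : (0 : ℝ) < r := by exact_mod_cast hr
  have hsmall : α * r ≤ r / 3 := by nlinarith
  have ha : (2 : ℝ) - d ≤ 0 := by
    have : (6 : ℝ) < d := by exact_mod_cast hd
    linarith
  calc _ ≤ ∑' x : {x : Fin d → ℤ // ‖x‖ ≤ α * r}, ∑' u : {u : Fin d → ℤ // ‖u‖ ≤ α * r},
          ∑' v : {v : Fin d → ℤ // ‖v‖ ≤ (r : ℝ)},
            (bulkTerm (2 - d) r x.1 u.1 v.1 + boundaryTerm (2 - d) r x.1 u.1 v.1) :=
        ENNReal.tsum_le_tsum fun x => ENNReal.tsum_le_tsum fun u => ENNReal.tsum_le_tsum fun v =>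
          summand_le_bulkTerm_add_boundaryTerm ha hr0 (x.2.trans hsmall) (u.2.trans hsmall)
    _ ≤ ENNReal.ofReal (C₁ * α ^ 2) + ENNReal.ofReal (C₂ * α ^ 2) := by
        simp only [ENNReal.tsum_add]
        exact add_le_add (hbulk α r hα.le hr0) (hboundary α r hα.le (by linarith) hr)
    _ ≤ ENNReal.ofReal ((C₁ + C₂ + 1) * α ^ 2) := by
        rw [← ENNReal.ofReal_add (by positivity) (by positivity)]
        exact ENNReal.ofReal_le_ofReal (by nlinarith [sq_nonneg α])
end
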